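/- arXiv:2412.16991 — 2 statements merged into one kernel-verified Lean document; each statement's English description precedes it below -/
import Mathlib

section
/- Let f ∈ L²_{sym}(A^p) and g ∈ L²_{sym}(A^q) with p, q ≥ 1 and 1 ≤ r < min(p,q). Then ‖f ⊗_r g‖²_{L²(A^{p+q−2r})} = ⟨f ⊗_{p−r} f, g ⊗_{q−r} g⟩_{L²(A^{2r})} ≤ (1/2)(‖f ⊗_r f‖²_{L²(A^{2p−2r})} + ‖g ⊗_r g‖²_{L²(A^{2q−2r})}). -/
open MeasureTheory
open scoped ENNReal NNReal

section AppendMap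
variable {α : Type*} [MeasurableSpace α] (μ : Measure α) [SigmaFinite μ]

theorem measurePreserving_finAppend (m n : ℕ) :
    MeasurePreserving (fun p : (Fin m → α) × (Fin n → α) => Fin.append p.1 p.2)
      ((Measure.pi fun _ => μ).prod (Measure.pi fun _ => μ))
      (Measure.pi fun _ : Fin (m + n) => μ) := by
  have h1 := measurePreserving_sumPiEquivProdPi_symm (fun _ : Fin m ⊕ Fin n => μ)
  have h2 := measurePreserving_piCongrLeft (fun _ : Fin (m + n) => μ) finSumFinEquiv
  have h := h2.comp h1
  convert h using 1
  funext p
  funext l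
  simp only [Function.comp_apply, MeasurableEquiv.coe_sumPiEquivProdPi_symm,
    MeasurableEquiv.piCongrLeft, Equiv.piCongrLeft_apply_eq_cast, MeasurableEquiv.coe_mk,
    Equiv.sumPiEquivProdPi_symm_apply, finSumFinEquiv, Fin.append, Fin.addCases,
    Equiv.coe_fn_mk, Equiv.coe_fn_symm_mk]
  by_cases h : (l : ℕ) < m
  · simp [h]
  · simp [h]
end AppendMap

section Abstract
variable {X Y Z : Type*} [MeasurableSpace X] [MeasurableSpace Y] [MeasurableSpace Z]
  {ρ : Measure X} {ν₁ : Measure Y} {ν₂ : Measure Z}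
  [SigmaFinite ρ] [SigmaFinite ν₁] [SigmaFinite ν₂]

theorem big_integrable {F : X × Y → ℝ} {G : X × Z → ℝ}
    (hFm : StronglyMeasurable F) (hGm : StronglyMeasurable G)
    (hF : MemLp F 2 (ρ.prod ν₁)) (hG : MemLp G 2 (ρ.prod ν₂)) :
    Integrable (fun s : (X × X) × (Y × Z) =>
      (F (s.1.1, s.2.1) * F (s.1.2, s.2.1)) * (G (s.1.1, s.2.2) * G (s.1.2, s.2.2)))
      ((ρ.prod ρ).prod (ν₁.prod ν₂)) := by
  have mF : Measurable F := hFm.measurable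
  have mG : Measurable G := hGm.measurable
  have m11 : Measurable fun s : (X × X) × (Y × Z) => (s.1.1, s.2.1) :=
    (measurable_fst.fst).prodMk (measurable_snd.fst)
  have m21 : Measurable fun s : (X × X) × (Y × Z) => (s.1.2, s.2.1) :=
    (measurable_fst.snd).prodMk (measurable_snd.fst)
  have m12 : Measurable fun s : (X × X) × (Y × Z) => (s.1.1, s.2.2) :=
    (measurable_fst.fst).prodMk (measurable_snd.snd)
  have m22 : Measurable fun s : (X × X) × (Y × Z) => (s.1.2, s.2.2) :=
    (measurable_fst.snd).prodMk (measurable_snd.snd)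
  have mΦ : Measurable (fun s : (X × X) × (Y × Z) =>
      (F (s.1.1, s.2.1) * F (s.1.2, s.2.1)) * (G (s.1.1, s.2.2) * G (s.1.2, s.2.2))) :=
    ((mF.comp m11).mul (mF.comp m21)).mul ((mG.comp m12).mul (mG.comp m22))
  refine ⟨mΦ.aestronglyMeasurable, ?_⟩
  -- finite integral
  rw [hasFiniteIntegral_def]
  set eF : X × Y → ℝ≥0∞ := fun t => (‖F t‖₊ : ℝ≥0∞) with heF
  set eG : X × Z → ℝ≥0∞ := fun t => (‖G t‖₊ : ℝ≥0∞) with heG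
  have meF : Measurable eF := mF.nnnorm.coe_nnreal_ennreal
  have meG : Measurable eG := mG.nnnorm.coe_nnreal_ennreal
  set φ : X → ℝ≥0∞ := fun x => ∫⁻ y, eF (x, y) ^ (2 : ℝ) ∂ν₁ with hφ
  set ψ : X → ℝ≥0∞ := fun x => ∫⁻ z, eG (x, z) ^ (2 : ℝ) ∂ν₂ with hψ
  have mφ : Measurable φ := Measurable.lintegral_prod_right' (f := fun t => eF t ^ (2:ℝ))
    (meF.pow_const _)
  have mψ : Measurable ψ := Measurable.lintegral_prod_right' (f := fun t => eG t ^ (2:ℝ))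
    (meG.pow_const _)
  have hconj : (2 : ℝ).HolderConjugate 2 := Real.holderConjugate_iff.mpr ⟨by norm_num, by norm_num⟩
  have hφfin : ∫⁻ x, φ x ∂ρ < ⊤ := by
    rw [hφ]
    rw [← lintegral_prod _ (meF.pow_const _).aemeasurable]
    have := lintegral_rpow_enorm_lt_top_of_eLpNorm_lt_top (f := F) (μ := ρ.prod ν₁)
      (p := 2) (by norm_num) (by norm_num) hF.2
    simpa [heF, enorm_eq_nnnorm] using this
  have hψfin : ∫⁻ x, ψ x ∂ρ < ⊤ := by
    rw [hψ]
    rw [← lintegral_prod _ (meG.pow_const _).aemeasurable]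
    have := lintegral_rpow_enorm_lt_top_of_eLpNorm_lt_top (f := G) (μ := ρ.prod ν₂)
      (p := 2) (by norm_num) (by norm_num) hG.2
    simpa [heG, enorm_eq_nnnorm] using this
  -- pointwise Cauchy–Schwarz in the inner variables
  have CS1 : ∀ u v : X, (∫⁻ y, eF (u, y) * eF (v, y) ∂ν₁) ≤ φ u ^ (1/2 : ℝ) * φ v ^ (1/2 : ℝ) := by
    intro u v
    have := ENNReal.lintegral_mul_le_Lp_mul_Lq ν₁ hconj
      (f := fun y => eF (u, y)) (g := fun y => eF (v, y))
      (meF.comp (measurable_const.prodMk measurable_id)).aemeasurable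
      (meF.comp (measurable_const.prodMk measurable_id)).aemeasurable
    simpa [hφ] using this
  have CS2 : ∀ u v : X, (∫⁻ z, eG (u, z) * eG (v, z) ∂ν₂) ≤ ψ u ^ (1/2 : ℝ) * ψ v ^ (1/2 : ℝ) := by
    intro u v
    have := ENNReal.lintegral_mul_le_Lp_mul_Lq ν₂ hconj
      (f := fun z => eG (u, z)) (g := fun z => eG (v, z))
      (meG.comp (measurable_const.prodMk measurable_id)).aemeasurable
      (meG.comp (measurable_const.prodMk measurable_id)).aemeasurable
    simpa [hψ] using this
  set h : X → ℝ≥0∞ := fun x => (φ x * ψ x) ^ (1/2 : ℝ) with hh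
  have mh : Measurable h := (mφ.mul mψ).pow_const _
  have hint : ∫⁻ x, h x ∂ρ < ⊤ := by
    have mφ2 : AEMeasurable (fun x => φ x ^ (1/2 : ℝ)) ρ := (mφ.pow_const _).aemeasurable
    have mψ2 : AEMeasurable (fun x => ψ x ^ (1/2 : ℝ)) ρ := (mψ.pow_const _).aemeasurable
    have hCS := ENNReal.lintegral_mul_le_Lp_mul_Lq ρ hconj mφ2 mψ2
    have heq : ∀ x : X, h x = φ x ^ (1/2 : ℝ) * ψ x ^ (1/2 : ℝ) := fun x =>
      ENNReal.mul_rpow_of_nonneg _ _ (by norm_num)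
    calc ∫⁻ x, h x ∂ρ = ∫⁻ x, φ x ^ (1/2 : ℝ) * ψ x ^ (1/2 : ℝ) ∂ρ := by
          simp_rw [heq]
      _ ≤ (∫⁻ x, (φ x ^ (1/2:ℝ)) ^ (2:ℝ) ∂ρ) ^ (1/2:ℝ) *
          (∫⁻ x, (ψ x ^ (1/2:ℝ)) ^ (2:ℝ) ∂ρ) ^ (1/2:ℝ) := hCS
      _ = (∫⁻ x, φ x ∂ρ) ^ (1/2:ℝ) * (∫⁻ x, ψ x ∂ρ) ^ (1/2:ℝ) := by
          congr 1 <;> · congr 1; refine lintegral_congr fun x => ?_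
                        rw [← ENNReal.rpow_mul]; norm_num
      _ < ⊤ := ENNReal.mul_lt_top (ENNReal.rpow_lt_top_of_nonneg (by norm_num) hφfin.ne)
          (ENNReal.rpow_lt_top_of_nonneg (by norm_num) hψfin.ne)
  -- now assemble
  have key : (∫⁻ s, ‖(F (s.1.1, s.2.1) * F (s.1.2, s.2.1)) *
      (G (s.1.1, s.2.2) * G (s.1.2, s.2.2))‖₊ ∂((ρ.prod ρ).prod (ν₁.prod ν₂)))
      ≤ (∫⁻ x, h x ∂ρ) * (∫⁻ x, h x ∂ρ) := by
    have mΦn : Measurable (fun s : (X × X) × (Y × Z) =>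
        ((‖(F (s.1.1, s.2.1) * F (s.1.2, s.2.1)) *
        (G (s.1.1, s.2.2) * G (s.1.2, s.2.2))‖₊ : ℝ≥0∞))) := mΦ.nnnorm.coe_nnreal_ennreal
    rw [lintegral_prod _ mΦn.aemeasurable]
    have step1 : ∀ p : X × X, (∫⁻ q, (‖(F (p.1, q.1) * F (p.2, q.1)) *
        (G (p.1, q.2) * G (p.2, q.2))‖₊ : ℝ≥0∞) ∂(ν₁.prod ν₂))
        ≤ h p.1 * h p.2 := by
      intro p
      have e1 : ∀ q : Y × Z, (‖(F (p.1, q.1) * F (p.2, q.1)) *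
          (G (p.1, q.2) * G (p.2, q.2))‖₊ : ℝ≥0∞)
          = (eF (p.1, q.1) * eF (p.2, q.1)) * (eG (p.1, q.2) * eG (p.2, q.2)) := by
        intro q; simp [heF, heG, nnnorm_mul, ENNReal.coe_mul]
      calc (∫⁻ q, (‖(F (p.1, q.1) * F (p.2, q.1)) *
          (G (p.1, q.2) * G (p.2, q.2))‖₊ : ℝ≥0∞) ∂(ν₁.prod ν₂))
          = ∫⁻ q, (eF (p.1, q.1) * eF (p.2, q.1)) * (eG (p.1, q.2) * eG (p.2, q.2))
            ∂(ν₁.prod ν₂) := by simp_rw [e1]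
        _ = (∫⁻ y, eF (p.1, y) * eF (p.2, y) ∂ν₁) * (∫⁻ z, eG (p.1, z) * eG (p.2, z) ∂ν₂) := by
            exact lintegral_prod_mul
              ((meF.comp (measurable_const.prodMk measurable_id)).mul
                (meF.comp (measurable_const.prodMk measurable_id))).aemeasurable
              ((meG.comp (measurable_const.prodMk measurable_id)).mul
                (meG.comp (measurable_const.prodMk measurable_id))).aemeasurable
        _ ≤ (φ p.1 ^ (1/2:ℝ) * φ p.2 ^ (1/2:ℝ)) * (ψ p.1 ^ (1/2:ℝ) * ψ p.2 ^ (1/2:ℝ)) :=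
            mul_le_mul' (CS1 p.1 p.2) (CS2 p.1 p.2)
        _ = h p.1 * h p.2 := by
            simp_rw [hh, ENNReal.mul_rpow_of_nonneg _ _ (by norm_num : (0:ℝ) ≤ 1/2)]
            ring
    calc (∫⁻ p, ∫⁻ q, (‖(F (p.1, q.1) * F (p.2, q.1)) *
        (G (p.1, q.2) * G (p.2, q.2))‖₊ : ℝ≥0∞) ∂(ν₁.prod ν₂) ∂(ρ.prod ρ))
        ≤ ∫⁻ p, h p.1 * h p.2 ∂(ρ.prod ρ) := lintegral_mono step1
      _ = (∫⁻ x, h x ∂ρ) * (∫⁻ x, h x ∂ρ) :=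
          lintegral_prod_mul mh.aemeasurable mh.aemeasurable
  exact lt_of_le_of_lt key (ENNReal.mul_lt_top hint hint)

theorem core_eq {F : X × Y → ℝ} {G : X × Z → ℝ}
    (hFm : StronglyMeasurable F) (hGm : StronglyMeasurable G)
    (hF : MemLp F 2 (ρ.prod ν₁)) (hG : MemLp G 2 (ρ.prod ν₂)) :
    (∫ y, ∫ z, (∫ x, F (x, y) * G (x, z) ∂ρ) ^ 2 ∂ν₂ ∂ν₁)
    = ∫ u, ∫ v, (∫ y, F (u, y) * F (v, y) ∂ν₁) * (∫ z, G (u, z) * G (v, z) ∂ν₂) ∂ρ ∂ρ := by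
  set Φ : (X × X) × (Y × Z) → ℝ := fun s =>
    (F (s.1.1, s.2.1) * F (s.1.2, s.2.1)) * (G (s.1.1, s.2.2) * G (s.1.2, s.2.2)) with hΦdef
  have hΦ : Integrable Φ ((ρ.prod ρ).prod (ν₁.prod ν₂)) := big_integrable hFm hGm hF hG
  -- Step 1: pointwise expansion of the square
  have step1 : ∀ (y : Y) (z : Z),
      (∫ x, F (x, y) * G (x, z) ∂ρ) ^ 2 = ∫ p, Φ (p, (y, z)) ∂(ρ.prod ρ) := by
    intro y z
    have := integral_prod_mul (μ := ρ) (ν := ρ)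
      (f := fun x => F (x, y) * G (x, z)) (g := fun x => F (x, y) * G (x, z))
    rw [sq, ← this]
    refine integral_congr_ae (Filter.Eventually.of_forall fun p => ?_)
    simp only [hΦdef]
    ring
  simp_rw [step1]
  -- Step 2: collapse the outer two integrals into one over the product
  have hswap : Integrable (fun s : (Y × Z) × (X × X) => Φ (s.2, s.1))
      ((ν₁.prod ν₂).prod (ρ.prod ρ)) := hΦ.swap
  have step2 : (∫ y, ∫ z, ∫ p, Φ (p, (y, z)) ∂(ρ.prod ρ) ∂ν₂ ∂ν₁)
      = ∫ q, ∫ p, Φ (p, q) ∂(ρ.prod ρ) ∂(ν₁.prod ν₂) := by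
    exact integral_integral (f := fun y z => ∫ p, Φ (p, (y, z)) ∂(ρ.prod ρ))
      (hswap.integral_prod_left)
  rw [step2]
  -- Step 3: swap the order
  have step3 : (∫ q, ∫ p, Φ (p, q) ∂(ρ.prod ρ) ∂(ν₁.prod ν₂))
      = ∫ p, ∫ q, Φ (p, q) ∂(ν₁.prod ν₂) ∂(ρ.prod ρ) :=
    integral_integral_swap (f := fun q p => Φ (p, q)) hswap
  rw [step3]
  -- Step 4: pointwise splitting of the inner product integral
  have step4 : ∀ p : X × X, (∫ q, Φ (p, q) ∂(ν₁.prod ν₂))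
      = (∫ y, F (p.1, y) * F (p.2, y) ∂ν₁) * ∫ z, G (p.1, z) * G (p.2, z) ∂ν₂ := by
    intro p
    exact integral_prod_mul (f := fun y => F (p.1, y) * F (p.2, y))
      (g := fun z => G (p.1, z) * G (p.2, z))
  simp_rw [step4]
  -- Step 5: split the outer product integral back into iterated integrals
  have hW : Integrable (fun p : X × X =>
      (∫ y, F (p.1, y) * F (p.2, y) ∂ν₁) * ∫ z, G (p.1, z) * G (p.2, z) ∂ν₂) (ρ.prod ρ) := by
    refine (hΦ.integral_prod_left).congr (Filter.Eventually.of_forall fun p => step4 p)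
  exact (integral_integral (f := fun u v =>
    (∫ y, F (u, y) * F (v, y) ∂ν₁) * ∫ z, G (u, z) * G (v, z) ∂ν₂) hW).symm

theorem S1_congr {F F' : X × Y → ℝ} {G G' : X × Z → ℝ}
    (hF : F =ᵐ[ρ.prod ν₁] F') (hG : G =ᵐ[ρ.prod ν₂] G') :
    (∫ y, ∫ z, (∫ x, F (x, y) * G (x, z) ∂ρ) ^ 2 ∂ν₂ ∂ν₁)
    = ∫ y, ∫ z, (∫ x, F' (x, y) * G' (x, z) ∂ρ) ^ 2 ∂ν₂ ∂ν₁ := by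
  have hFs : (fun s : Y × X => F (s.2, s.1)) =ᵐ[ν₁.prod ρ] fun s => F' (s.2, s.1) := by
    have : F ∘ Prod.swap =ᵐ[ν₁.prod ρ] F' ∘ Prod.swap := by
      refine ae_eq_comp measurable_swap.aemeasurable ?_
      rwa [Measure.prod_swap]
    exact this
  have hGs : (fun s : Z × X => G (s.2, s.1)) =ᵐ[ν₂.prod ρ] fun s => G' (s.2, s.1) := by
    have : G ∘ Prod.swap =ᵐ[ν₂.prod ρ] G' ∘ Prod.swap := by
      refine ae_eq_comp measurable_swap.aemeasurable ?_
      rwa [Measure.prod_swap]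
    exact this
  have hF2 : ∀ᵐ y ∂ν₁, ∀ᵐ x ∂ρ, F (x, y) = F' (x, y) := Measure.ae_ae_of_ae_prod hFs
  have hG2 : ∀ᵐ z ∂ν₂, ∀ᵐ x ∂ρ, G (x, z) = G' (x, z) := Measure.ae_ae_of_ae_prod hGs
  refine integral_congr_ae ?_
  filter_upwards [hF2] with y hy
  refine integral_congr_ae ?_
  filter_upwards [hG2] with z hz
  have : (∫ x, F (x, y) * G (x, z) ∂ρ) = ∫ x, F' (x, y) * G' (x, z) ∂ρ := by
    refine integral_congr_ae ?_
    filter_upwards [hy, hz] with x h1 h2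
    rw [h1, h2]
  rw [this]

theorem S2_congr {F F' : X × Y → ℝ} {G G' : X × Z → ℝ}
    (hF : F =ᵐ[ρ.prod ν₁] F') (hG : G =ᵐ[ρ.prod ν₂] G') :
    (∫ u, ∫ v, (∫ y, F (u, y) * F (v, y) ∂ν₁) * (∫ z, G (u, z) * G (v, z) ∂ν₂) ∂ρ ∂ρ)
    = ∫ u, ∫ v, (∫ y, F' (u, y) * F' (v, y) ∂ν₁) * (∫ z, G' (u, z) * G' (v, z) ∂ν₂) ∂ρ ∂ρ := by
  have hF2 : ∀ᵐ u ∂ρ, ∀ᵐ y ∂ν₁, F (u, y) = F' (u, y) := Measure.ae_ae_of_ae_prod hF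
  have hG2 : ∀ᵐ u ∂ρ, ∀ᵐ z ∂ν₂, G (u, z) = G' (u, z) := Measure.ae_ae_of_ae_prod hG
  refine integral_congr_ae ?_
  filter_upwards [hF2, hG2] with u hu1 hu2
  refine integral_congr_ae ?_
  filter_upwards [hF2, hG2] with v hv1 hv2
  have e1 : (∫ y, F (u, y) * F (v, y) ∂ν₁) = ∫ y, F' (u, y) * F' (v, y) ∂ν₁ := by
    refine integral_congr_ae ?_
    filter_upwards [hu1, hv1] with y h1 h2
    rw [h1, h2]
  have e2 : (∫ z, G (u, z) * G (v, z) ∂ν₂) = ∫ z, G' (u, z) * G' (v, z) ∂ν₂ := by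
    refine integral_congr_ae ?_
    filter_upwards [hu2, hv2] with z h1 h2
    rw [h1, h2]
  rw [e1, e2]

theorem part2_le {F : X × Y → ℝ} {G : X × Z → ℝ}
    (hFm : StronglyMeasurable F) (hGm : StronglyMeasurable G)
    (hF : MemLp F 2 (ρ.prod ν₁)) (hG : MemLp G 2 (ρ.prod ν₂)) :
    (∫ u, ∫ v, (∫ y, F (u, y) * F (v, y) ∂ν₁) * (∫ z, G (u, z) * G (v, z) ∂ν₂) ∂ρ ∂ρ)
    ≤ (1 / 2) *
      ((∫ u, ∫ v, (∫ y, F (u, y) * F (v, y) ∂ν₁) * (∫ y, F (u, y) * F (v, y) ∂ν₁) ∂ρ ∂ρ) +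
       (∫ u, ∫ v, (∫ z, G (u, z) * G (v, z) ∂ν₂) * (∫ z, G (u, z) * G (v, z) ∂ν₂) ∂ρ ∂ρ)) := by
  set Ff : X × X → ℝ := fun p => ∫ y, F (p.1, y) * F (p.2, y) ∂ν₁ with hFf
  set Gg : X × X → ℝ := fun p => ∫ z, G (p.1, z) * G (p.2, z) ∂ν₂ with hGg
  have hFG : Integrable (fun p => Ff p * Gg p) (ρ.prod ρ) := by
    refine ((big_integrable hFm hGm hF hG).integral_prod_left).congr
      (Filter.Eventually.of_forall fun p => ?_)
    exact integral_prod_mul (f := fun y => F (p.1, y) * F (p.2, y))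
      (g := fun z => G (p.1, z) * G (p.2, z))
  have hFF : Integrable (fun p => Ff p * Ff p) (ρ.prod ρ) := by
    refine ((big_integrable hFm hFm hF hF).integral_prod_left).congr
      (Filter.Eventually.of_forall fun p => ?_)
    exact integral_prod_mul (f := fun y => F (p.1, y) * F (p.2, y))
      (g := fun y => F (p.1, y) * F (p.2, y))
  have hGG : Integrable (fun p => Gg p * Gg p) (ρ.prod ρ) := by
    refine ((big_integrable hGm hGm hG hG).integral_prod_left).congr
      (Filter.Eventually.of_forall fun p => ?_)
    exact integral_prod_mul (f := fun z => G (p.1, z) * G (p.2, z))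
      (g := fun z => G (p.1, z) * G (p.2, z))
  have e1 : (∫ u, ∫ v, (∫ y, F (u, y) * F (v, y) ∂ν₁) * (∫ z, G (u, z) * G (v, z) ∂ν₂) ∂ρ ∂ρ)
      = ∫ p, Ff p * Gg p ∂(ρ.prod ρ) :=
    integral_integral (f := fun u v => Ff (u, v) * Gg (u, v)) hFG
  have e2 : (∫ u, ∫ v, (∫ y, F (u, y) * F (v, y) ∂ν₁) *
        (∫ y, F (u, y) * F (v, y) ∂ν₁) ∂ρ ∂ρ)
      = ∫ p, Ff p * Ff p ∂(ρ.prod ρ) :=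
    integral_integral (f := fun u v => Ff (u, v) * Ff (u, v)) hFF
  have e3 : (∫ u, ∫ v, (∫ z, G (u, z) * G (v, z) ∂ν₂) *
        (∫ z, G (u, z) * G (v, z) ∂ν₂) ∂ρ ∂ρ)
      = ∫ p, Gg p * Gg p ∂(ρ.prod ρ) :=
    integral_integral (f := fun u v => Gg (u, v) * Gg (u, v)) hGG
  rw [e1, e2, e3]
  have key : (∫ p, Ff p * Gg p ∂(ρ.prod ρ))
      ≤ ∫ p, (Ff p * Ff p + Gg p * Gg p) / 2 ∂(ρ.prod ρ) := by
    refine integral_mono hFG ((hFF.add hGG).div_const 2) fun p => ?_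
    nlinarith [sq_nonneg (Ff p - Gg p)]
  calc (∫ p, Ff p * Gg p ∂(ρ.prod ρ))
      ≤ ∫ p, (Ff p * Ff p + Gg p * Gg p) / 2 ∂(ρ.prod ρ) := key
    _ = (1 / 2) * ((∫ p, Ff p * Ff p ∂(ρ.prod ρ)) + ∫ p, Gg p * Gg p ∂(ρ.prod ρ)) := by
        rw [integral_div, integral_add hFF hGG]
        ring
end Abstract

set_option linter.unusedVariables false in
/-- For symmetric `f ∈ L²_{sym}(A^{r+a})`, `g ∈ L²_{sym}(A^{r+b})` (`p = r+a`, `q = r+b`,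
`1 ≤ r < min p q`): `‖f ⊗_r g‖² = ⟨f ⊗_{p−r} f, g ⊗_{q−r} g⟩ ≤ ½(‖f ⊗_r f‖² + ‖g ⊗_r g‖²)`. -/
theorem contraction_sq_norm_eq_and_le
    (A : Type*) [MeasurableSpace A] (μ : Measure A) [SigmaFinite μ]
    (r a b : ℕ) (hr : 0 < r) (ha : 0 < a) (hb : 0 < b)
    (f : (Fin (r + a) → A) → ℝ) (g : (Fin (r + b) → A) → ℝ)
    (hfsym : ∀ (x : Fin (r + a) → A) (σ : Equiv.Perm (Fin (r + a))), f (x ∘ σ) = f x)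
    (hgsym : ∀ (x : Fin (r + b) → A) (σ : Equiv.Perm (Fin (r + b))), g (x ∘ σ) = g x)
    (hf : MemLp f 2 (Measure.pi fun _ : Fin (r + a) => μ))
    (hg : MemLp g 2 (Measure.pi fun _ : Fin (r + b) => μ)) :
    (∫ y : Fin a → A, ∫ z : Fin b → A,
        (∫ x : Fin r → A, f (Fin.append x y) * g (Fin.append x z)
          ∂(Measure.pi fun _ => μ)) ^ 2
        ∂(Measure.pi fun _ => μ) ∂(Measure.pi fun _ => μ))
    = (∫ u : Fin r → A, ∫ v : Fin r → A,
        (∫ x : Fin a → A, f (Fin.append u x) * f (Fin.append v x)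
          ∂(Measure.pi fun _ => μ)) *
        (∫ w : Fin b → A, g (Fin.append u w) * g (Fin.append v w)
          ∂(Measure.pi fun _ => μ))
        ∂(Measure.pi fun _ => μ) ∂(Measure.pi fun _ => μ))
    ∧
    (∫ u : Fin r → A, ∫ v : Fin r → A,
        (∫ x : Fin a → A, f (Fin.append u x) * f (Fin.append v x)
          ∂(Measure.pi fun _ => μ)) *
        (∫ w : Fin b → A, g (Fin.append u w) * g (Fin.append v w)
          ∂(Measure.pi fun _ => μ))
        ∂(Measure.pi fun _ => μ) ∂(Measure.pi fun _ => μ))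
    ≤ (1 / 2) *
      ((∫ y : Fin a → A, ∫ z : Fin a → A,
          (∫ x : Fin r → A, f (Fin.append x y) * f (Fin.append x z)
            ∂(Measure.pi fun _ => μ)) ^ 2
          ∂(Measure.pi fun _ => μ) ∂(Measure.pi fun _ => μ)) +
       (∫ y : Fin b → A, ∫ z : Fin b → A,
          (∫ x : Fin r → A, g (Fin.append x y) * g (Fin.append x z)
            ∂(Measure.pi fun _ => μ)) ^ 2
          ∂(Measure.pi fun _ => μ) ∂(Measure.pi fun _ => μ))) := by
  set ρ : Measure (Fin r → A) := Measure.pi fun _ => μ with hρ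
  set νa : Measure (Fin a → A) := Measure.pi fun _ => μ with hνa
  set νb : Measure (Fin b → A) := Measure.pi fun _ => μ with hνb
  have Ta := measurePreserving_finAppend μ r a
  have Tb := measurePreserving_finAppend μ r b
  -- measurable representatives
  set f' : (Fin (r + a) → A) → ℝ := hf.1.mk f with hf'def
  set g' : (Fin (r + b) → A) → ℝ := hg.1.mk g with hg'def
  have hf'sm : StronglyMeasurable f' := hf.1.stronglyMeasurable_mk
  have hg'sm : StronglyMeasurable g' := hg.1.stronglyMeasurable_mk
  have hf' : MemLp f' 2 (Measure.pi fun _ : Fin (r + a) => μ) := hf.ae_eq hf.1.ae_eq_mk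
  have hg' : MemLp g' 2 (Measure.pi fun _ : Fin (r + b) => μ) := hg.ae_eq hg.1.ae_eq_mk
  set F : (Fin r → A) × (Fin a → A) → ℝ := fun p => f' (Fin.append p.1 p.2) with hFdef
  set G : (Fin r → A) × (Fin b → A) → ℝ := fun p => g' (Fin.append p.1 p.2) with hGdef
  have hFsm : StronglyMeasurable F := hf'sm.comp_measurable Ta.measurable
  have hGsm : StronglyMeasurable G := hg'sm.comp_measurable Tb.measurable
  have hFmem : MemLp F 2 (ρ.prod νa) := by
    refine (memLp_map_measure_iff ?_ Ta.measurable.aemeasurable).mp ?_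
    · rw [Ta.map_eq]; exact hf'sm.aestronglyMeasurable
    · rw [Ta.map_eq]; exact hf'
  have hGmem : MemLp G 2 (ρ.prod νb) := by
    refine (memLp_map_measure_iff ?_ Tb.measurable.aemeasurable).mp ?_
    · rw [Tb.map_eq]; exact hg'sm.aestronglyMeasurable
    · rw [Tb.map_eq]; exact hg'
  have hF0 : (fun p : (Fin r → A) × (Fin a → A) => f (Fin.append p.1 p.2)) =ᵐ[ρ.prod νa] F := by
    exact Ta.quasiMeasurePreserving.ae_eq_comp hf.1.ae_eq_mk
  have hG0 : (fun p : (Fin r → A) × (Fin b → A) => g (Fin.append p.1 p.2)) =ᵐ[ρ.prod νb] G := by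
    exact Tb.quasiMeasurePreserving.ae_eq_comp hg.1.ae_eq_mk
  have part1 :
      (∫ y : Fin a → A, ∫ z : Fin b → A,
        (∫ x : Fin r → A, f (Fin.append x y) * g (Fin.append x z) ∂ρ) ^ 2 ∂νb ∂νa)
      = (∫ u : Fin r → A, ∫ v : Fin r → A,
        (∫ x : Fin a → A, f (Fin.append u x) * f (Fin.append v x) ∂νa) *
        (∫ w : Fin b → A, g (Fin.append u w) * g (Fin.append v w) ∂νb) ∂ρ ∂ρ) :=
    (S1_congr hF0 hG0).trans ((core_eq hFsm hGsm hFmem hGmem).trans (S2_congr hF0 hG0).symm)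
  refine ⟨part1, ?_⟩
  calc (∫ u : Fin r → A, ∫ v : Fin r → A,
        (∫ x : Fin a → A, f (Fin.append u x) * f (Fin.append v x) ∂νa) *
        (∫ w : Fin b → A, g (Fin.append u w) * g (Fin.append v w) ∂νb) ∂ρ ∂ρ)
      = ∫ u, ∫ v, (∫ x, F (u, x) * F (v, x) ∂νa) * (∫ w, G (u, w) * G (v, w) ∂νb) ∂ρ ∂ρ :=
        S2_congr hF0 hG0
    _ ≤ (1 / 2) *
        ((∫ u, ∫ v, (∫ x, F (u, x) * F (v, x) ∂νa) * (∫ x, F (u, x) * F (v, x) ∂νa) ∂ρ ∂ρ) +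
         (∫ u, ∫ v, (∫ w, G (u, w) * G (v, w) ∂νb) * (∫ w, G (u, w) * G (v, w) ∂νb) ∂ρ ∂ρ)) :=
        part2_le hFsm hGsm hFmem hGmem
    _ = (1 / 2) *
        ((∫ y : Fin a → A, ∫ z : Fin a → A,
            (∫ x : Fin r → A, f (Fin.append x y) * f (Fin.append x z) ∂ρ) ^ 2 ∂νa ∂νa) +
         (∫ y : Fin b → A, ∫ z : Fin b → A,
            (∫ x : Fin r → A, g (Fin.append x y) * g (Fin.append x z) ∂ρ) ^ 2 ∂νb ∂νb)) := by
        rw [← core_eq hFsm hFsm hFmem hFmem, ← core_eq hGsm hGsm hGmem hGmem,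
          ← S1_congr hF0 hF0, ← S1_congr hG0 hG0]
end

section
/- Let ρ: ℤ → ℝ satisfy |ρ(k)| ≤ 1 for all k and ρ(−k) = ρ(k). For integers n ≥ 1, p ≥ 1 and q > p, (1/n²) |∑_{k₁,k₂,k₃,k₄=0}^{n−1} ρ(k₁−k₃)^{2p} ρ(k₂−k₄)^{2p} ρ(k₃−k₄)^{2q−2p}| ≤ (C/n) (∑_{j=0}^{n−1} |ρ(j)|^{2p})² (∑_{j=0}^{n−1} |ρ(j)|²) for a constant C independent of n. -/
/-!
Bound the summand in absolute value, using `|ρ| ≤ 1` and `2q − 2p ≥ 2` to replace the third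
factor by `|ρ(k₃ − k₄)|²`. For fixed `k₃, k₄` the sums over `k₁` and `k₂` factor, and since `ρ`
is even each row sum `∑_{k<n} |ρ(k − k₀)|^m` is at most `2 ∑_{j<n} |ρ(j)|^m`. The remaining sum
over `k₃, k₄` contributes `n · 2 ∑_{j<n} |ρ(j)|²`, so `C = 8` works.
-/

open Finset

lemma sum_comp_le_sum_of_injOn {ι κ : Type*} {s : Finset ι} {t : Finset κ} {f : κ → ℝ}
    (e : ι → κ) (he : Set.InjOn e s) (hst : Set.MapsTo e s t) (hf : ∀ j ∈ t, 0 ≤ f j) :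
    ∑ i ∈ s, f (e i) ≤ ∑ j ∈ t, f j := by
  classical
  rw [← sum_image he]
  exact sum_le_sum_of_subset_of_nonneg (image_subset_iff.2 hst) fun j hj _ ↦ hf j hj

lemma sum_sum_sum_sum_comm {ι M : Type*} [AddCommMonoid M] (s : Finset ι)
    (f : ι → ι → ι → ι → M) :
    ∑ a ∈ s, ∑ b ∈ s, ∑ c ∈ s, ∑ d ∈ s, f a b c d
      = ∑ c ∈ s, ∑ d ∈ s, ∑ a ∈ s, ∑ b ∈ s, f a b c d :=
  calc _ = ∑ a ∈ s, ∑ c ∈ s, ∑ b ∈ s, ∑ d ∈ s, f a b c d := sum_congr rfl fun _ _ ↦ sum_comm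
    _ = ∑ c ∈ s, ∑ a ∈ s, ∑ b ∈ s, ∑ d ∈ s, f a b c d := sum_comm
    _ = ∑ c ∈ s, ∑ a ∈ s, ∑ d ∈ s, ∑ b ∈ s, f a b c d :=
      sum_congr rfl fun _ _ ↦ sum_congr rfl fun _ _ ↦ sum_comm
    _ = _ := sum_congr rfl fun _ _ ↦ sum_comm

section EvenNonneg

variable {f g : ℤ → ℝ}

lemma sum_range_sub_le_two_mul (hf : ∀ k, 0 ≤ f k) (heven : ∀ k, f (-k) = f k)
    {n k₀ : ℕ} (hk₀ : k₀ < n) :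
    ∑ k ∈ range n, f (k - k₀) ≤ 2 * ∑ j ∈ range n, f j := by
  rw [← sum_filter_add_sum_filter_not (range n) (· < k₀), two_mul]
  refine add_le_add ?_ ?_
  · calc ∑ k ∈ range n with k < k₀, f (k - k₀)
        = ∑ k ∈ range n with k < k₀, f ((k₀ - k : ℕ) : ℤ) := by
          refine sum_congr rfl fun k hk ↦ ?_
          rw [← heven, Nat.cast_sub (mem_filter.1 hk).2.le, neg_sub]
      _ ≤ ∑ j ∈ range n, f j :=
          sum_comp_le_sum_of_injOn (fun k ↦ k₀ - k)
            (fun a ha b hb h ↦ by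
              simp only [coe_filter, mem_range, Set.mem_ofPred_eq] at ha hb h; omega)
            (fun a ha ↦ by
              simp only [coe_filter, mem_range, Set.mem_ofPred_eq, coe_range, Set.mem_Iio] at ha ⊢
              omega)
            fun j _ ↦ hf j
  · calc ∑ k ∈ range n with ¬k < k₀, f (k - k₀)
        = ∑ k ∈ range n with ¬k < k₀, f ((k - k₀ : ℕ) : ℤ) := by
          refine sum_congr rfl fun k hk ↦ ?_
          rw [Nat.cast_sub (not_lt.1 (mem_filter.1 hk).2)]
      _ ≤ ∑ j ∈ range n, f j :=
          sum_comp_le_sum_of_injOn (fun k ↦ k - k₀)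
            (fun a ha b hb h ↦ by
              simp only [coe_filter, mem_range, Set.mem_ofPred_eq] at ha hb h; omega)
            (fun a ha ↦ by
              simp only [coe_filter, mem_range, Set.mem_ofPred_eq, coe_range, Set.mem_Iio] at ha ⊢
              omega)
            fun j _ ↦ hf j

lemma sum_quadruple_le (hf : ∀ k, 0 ≤ f k) (hfeven : ∀ k, f (-k) = f k)
    (hg : ∀ k, 0 ≤ g k) (hgeven : ∀ k, g (-k) = g k) (n : ℕ) :
    ∑ k₁ ∈ range n, ∑ k₂ ∈ range n, ∑ k₃ ∈ range n, ∑ k₄ ∈ range n,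
        f ((k₁ : ℤ) - k₃) * f ((k₂ : ℤ) - k₄) * g ((k₃ : ℤ) - k₄)
      ≤ 8 * n * (∑ j ∈ range n, f j) ^ 2 * ∑ j ∈ range n, g j := by
  set F := ∑ j ∈ range n, f j
  set G := ∑ j ∈ range n, g j
  have hF : 0 ≤ F := sum_nonneg fun j _ ↦ hf j
  have hrow {k₀ : ℕ} (hk₀ : k₀ ∈ range n) : ∑ k ∈ range n, f ((k : ℤ) - k₀) ≤ 2 * F :=
    sum_range_sub_le_two_mul hf hfeven (mem_range.1 hk₀)
  rw [sum_sum_sum_sum_comm]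
  calc _ = ∑ k₃ ∈ range n, ∑ k₄ ∈ range n, (∑ k₁ ∈ range n, f ((k₁ : ℤ) - k₃))
          * (∑ k₂ ∈ range n, f ((k₂ : ℤ) - k₄)) * g ((k₄ : ℤ) - k₃) := by
        refine sum_congr rfl fun k₃ _ ↦ sum_congr rfl fun k₄ _ ↦ ?_
        rw [← neg_sub, hgeven, sum_mul_sum]
        simp only [sum_mul]
    _ ≤ ∑ k₃ ∈ range n, ∑ k₄ ∈ range n, 2 * F * (2 * F) * g ((k₄ : ℤ) - k₃) := by
        gcongr with k₃ hk₃ k₄ hk₄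
        · exact hg _
        · exact sum_nonneg fun _ _ ↦ hf _
        · exact hrow hk₃
        · exact hrow hk₄
    _ = 2 * F * (2 * F) * ∑ k₃ ∈ range n, ∑ k₄ ∈ range n, g ((k₄ : ℤ) - k₃) := by
        simp only [mul_sum]
    _ ≤ 2 * F * (2 * F) * ∑ k₃ ∈ range n, 2 * G := by
        gcongr with k₃ hk₃
        exact sum_range_sub_le_two_mul hg hgeven (mem_range.1 hk₃)
    _ = 8 * n * F ^ 2 * G := by
        rw [sum_const, card_range, nsmul_eq_mul]
        ring

end EvenNonneg

lemma norm_pow_mul_pow_mul_pow_le {x y z : ℝ} (hz : |z| ≤ 1) {a b c : ℕ} (hc : 2 ≤ c) :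
    ‖x ^ a * y ^ b * z ^ c‖ ≤ |x| ^ a * |y| ^ b * |z| ^ 2 := by
  rw [Real.norm_eq_abs, abs_mul, abs_mul, abs_pow, abs_pow, abs_pow]
  exact mul_le_mul_of_nonneg_left (pow_le_pow_of_le_one (abs_nonneg z) hz hc) (by positivity)

theorem quadruple_sum_bound_general (ρ : ℤ → ℝ) (hbd : ∀ k, |ρ k| ≤ 1)
    (heven : ∀ k, ρ (-k) = ρ k) (p q : ℕ) (hpq : p < q) :
    ∃ C : ℝ, 0 < C ∧ ∀ n : ℕ, 1 ≤ n →
      (1 / (n : ℝ) ^ 2) *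
        |∑ k₁ ∈ Finset.range n, ∑ k₂ ∈ Finset.range n, ∑ k₃ ∈ Finset.range n,
          ∑ k₄ ∈ Finset.range n,
            ρ ((k₁ : ℤ) - k₃) ^ (2 * p) * ρ ((k₂ : ℤ) - k₄) ^ (2 * p)
              * ρ ((k₃ : ℤ) - k₄) ^ (2 * q - 2 * p)|
      ≤ (C / n) * (∑ j ∈ Finset.range n, |ρ (j : ℤ)| ^ (2 * p)) ^ 2
          * (∑ j ∈ Finset.range n, |ρ (j : ℤ)| ^ 2) := by
  refine ⟨8, by norm_num, fun n hn ↦ ?_⟩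
  have habs_even (m : ℕ) (k : ℤ) : |ρ (-k)| ^ m = |ρ k| ^ m := by rw [heven]
  have hsum := sum_quadruple_le (f := fun k ↦ |ρ k| ^ (2 * p)) (g := fun k ↦ |ρ k| ^ 2)
    (fun _ ↦ by positivity) (habs_even _) (fun _ ↦ by positivity) (habs_even _) n
  have hn' : (0 : ℝ) < n := by exact_mod_cast hn
  calc _ ≤ 1 / (n : ℝ) ^ 2 * (8 * n * (∑ j ∈ range n, |ρ j| ^ (2 * p)) ^ 2
          * ∑ j ∈ range n, |ρ j| ^ 2) := by
        gcongr
        rw [← Real.norm_eq_abs]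
        refine (norm_sum_le_of_le _ fun k₁ _ ↦ norm_sum_le_of_le _ fun k₂ _ ↦
          norm_sum_le_of_le _ fun k₃ _ ↦ norm_sum_le_of_le _ fun k₄ _ ↦ ?_).trans hsum
        exact norm_pow_mul_pow_mul_pow_le (hbd _) (by omega)
    _ = _ := by field_simp

/-- Covariance sum estimate: for `|ρ| ≤ 1` even, `p ≥ 1`, `q > p`, there is `C`
(independent of `n`) with
`(1/n²)|∑_{k₁,k₂,k₃,k₄=0}^{n−1} ρ(k₁−k₃)^{2p} ρ(k₂−k₄)^{2p} ρ(k₃−k₄)^{2q−2p}|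
  ≤ (C/n)(∑_{j<n}|ρ(j)|^{2p})²(∑_{j<n}|ρ(j)|²)`. -/
theorem quadruple_sum_bound (ρ : ℤ → ℝ) (hbd : ∀ k, |ρ k| ≤ 1)
    (heven : ∀ k, ρ (-k) = ρ k) (p q : ℕ) (hp : 1 ≤ p) (hpq : p < q) :
    ∃ C : ℝ, 0 < C ∧ ∀ n : ℕ, 1 ≤ n →
      (1 / (n : ℝ) ^ 2) *
        |∑ k₁ ∈ Finset.range n, ∑ k₂ ∈ Finset.range n, ∑ k₃ ∈ Finset.range n,
          ∑ k₄ ∈ Finset.range n,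
            ρ ((k₁ : ℤ) - k₃) ^ (2 * p) * ρ ((k₂ : ℤ) - k₄) ^ (2 * p)
              * ρ ((k₃ : ℤ) - k₄) ^ (2 * q - 2 * p)|
      ≤ (C / n) * (∑ j ∈ Finset.range n, |ρ (j : ℤ)| ^ (2 * p)) ^ 2
          * (∑ j ∈ Finset.range n, |ρ (j : ℤ)| ^ 2) :=
  quadruple_sum_bound_general ρ hbd heven p q hpq
end
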